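/- arXiv:2308.16626 — 2 statements merged into one kernel-verified Lean document; each statement's English description precedes it below -/
import Mathlib

section
/- Fix n ≥ 1. Let (B, E) be a complete shifted bipartition of {1, …, n}. Then J(B, E) is a maximal (for inclusion) adjacency-avoiding subset of I_n; i.e. J(B,E) is adjacency-avoiding and for every interval K ∈ I_n \ J(B,E), the set J(B,E) ∪ {K} is not adjacency-avoiding. -/
/-- `K` is an interval of `{1, …, n}`: a set `⟦i,j⟧ = {i, i+1, …, j}` with `1 ≤ i ≤ j ≤ n`. -/
def IsInterval (n : ℕ) (K : Set ℕ) : Prop :=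
  ∃ i j, 1 ≤ i ∧ i ≤ j ∧ j ≤ n ∧ K = Set.Icc i j

/-- The lower bound `b(K)` of an interval `K`. -/
noncomputable def intB (K : Set ℕ) : ℕ := sInf K

/-- The upper bound `e(K)` of an interval `K`. -/
noncomputable def intE (K : Set ℕ) : ℕ := sSup K

/-- `J(B, E)`: the set of intervals `K` of `{1, …, n}` with `b(K) ∈ B` and `e(K) ∈ E`. -/
def intervalsOf (n : ℕ) (B E : Set ℕ) : Set (Set ℕ) :=
  {K | IsInterval n K ∧ intB K ∈ B ∧ intE K ∈ E}

/-- Two intervals `K`, `L` are adjacent if `b(K) = e(L) + 1` or `b(L) = e(K) + 1`. -/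
def Adjacent (K L : Set ℕ) : Prop :=
  intB K = intE L + 1 ∨ intB L = intE K + 1

/-- An interval set is adjacency-avoiding if it contains no pair of adjacent intervals. -/
def AdjAvoiding (J : Set (Set ℕ)) : Prop :=
  ∀ K ∈ J, ∀ L ∈ J, ¬ Adjacent K L

/-- The shift `A[1] = {a + 1 : a ∈ A}` of a set of integers. -/
def shiftSet (A : Set ℕ) : Set ℕ := (· + 1) '' A

lemma intB_Icc {i j : ℕ} (h : i ≤ j) : intB (Set.Icc i j) = i := by
  simp [intB, csInf_Icc h]

lemma intE_Icc {i j : ℕ} (h : i ≤ j) : intE (Set.Icc i j) = j := by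
  simp [intE, csSup_Icc h]

lemma adjacent_Icc {i j k l : ℕ} (hij : i ≤ j) (hkl : k ≤ l) :
    Adjacent (Set.Icc i j) (Set.Icc k l) ↔ i = l + 1 ∨ k = j + 1 := by
  rw [Adjacent, intB_Icc hij, intE_Icc hij, intB_Icc hkl, intE_Icc hkl]

lemma succ_mem_shiftSet {A : Set ℕ} {a : ℕ} : a + 1 ∈ shiftSet A ↔ a ∈ A :=
  (add_left_injective 1).mem_set_image

section

variable {n : ℕ} {B E : Set ℕ}

lemma Icc_mem_intervalsOf {i j : ℕ} (hi : 1 ≤ i) (hij : i ≤ j) (hj : j ≤ n) :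
    Set.Icc i j ∈ intervalsOf n B E ↔ i ∈ B ∧ j ∈ E := by
  simp only [intervalsOf, Set.mem_ofPred_eq, intB_Icc hij, intE_Icc hij, and_iff_right_iff_imp]
  exact fun _ ↦ ⟨i, j, hi, hij, hj, rfl⟩

lemma adjAvoiding_intervalsOf (h : Disjoint B (shiftSet E)) :
    AdjAvoiding (intervalsOf n B E) := by
  rintro K ⟨-, hbK, heK⟩ L ⟨-, hbL, heL⟩ (hKL | hLK)
  · exact h.ne_of_mem hbK ⟨_, heL, rfl⟩ hKL
  · exact h.ne_of_mem hbL ⟨_, heK, rfl⟩ hLK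

lemma one_mem_of_Icc_subset (hE : E ⊆ Set.Icc 1 n)
    (hcover : Set.Icc 1 (n + 1) ⊆ B ∪ shiftSet E) : 1 ∈ B := by
  rcases hcover ⟨le_rfl, by omega⟩ with h | ⟨e, he, he1⟩
  · exact h
  · have := (hE he).1
    simp only at he1
    omega

lemma mem_of_Icc_subset (hB : B ⊆ Set.Icc 1 n)
    (hcover : Set.Icc 1 (n + 1) ⊆ B ∪ shiftSet E) : n ∈ E := by
  rcases hcover ⟨by omega, le_rfl⟩ with h | h
  · have := (hB h).2
    omega
  · exact succ_mem_shiftSet.mp h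

/-- An interval `⟦i,j⟧ ∉ J(B,E)` has a neighbour in `J(B,E)`: `⟦j+1,n⟧` if `i ∈ B`,
and `⟦1,i-1⟧` otherwise. -/
lemma exists_mem_intervalsOf_adjacent (hB : B ⊆ Set.Icc 1 n) (hE : E ⊆ Set.Icc 1 n)
    (hcover : Set.Icc 1 (n + 1) ⊆ B ∪ shiftSet E) {i j : ℕ} (hi : 1 ≤ i) (hij : i ≤ j)
    (hj : j ≤ n) (hK : Set.Icc i j ∉ intervalsOf n B E) :
    ∃ L ∈ intervalsOf n B E, Adjacent (Set.Icc i j) L := by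
  rw [Icc_mem_intervalsOf hi hij hj] at hK
  by_cases hiB : i ∈ B
  · have hjB : j + 1 ∈ B := (hcover ⟨by omega, by omega⟩).resolve_right
      fun h ↦ hK ⟨hiB, succ_mem_shiftSet.mp h⟩
    have hjn := (hB hjB).2
    refine ⟨Set.Icc (j + 1) n, (Icc_mem_intervalsOf (by omega) hjn le_rfl).mpr
      ⟨hjB, mem_of_Icc_subset hB hcover⟩, ?_⟩
    exact (adjacent_Icc hij hjn).mpr (Or.inr rfl)
  · obtain ⟨e, he, rfl⟩ : i ∈ shiftSet E := (hcover ⟨hi, by omega⟩).resolve_left hiB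
    obtain ⟨he1, hen⟩ := hE he
    refine ⟨Set.Icc 1 e, (Icc_mem_intervalsOf le_rfl he1 hen).mpr
      ⟨one_mem_of_Icc_subset hE hcover, he⟩, ?_⟩
    exact (adjacent_Icc hij he1).mpr (Or.inl rfl)

end

theorem complete_shifted_bipartition_maximal_general (n : ℕ) (B E : Set ℕ)
    (hB : B ⊆ Set.Icc 1 n) (hE : E ⊆ Set.Icc 1 n)
    (hunion : B ∪ shiftSet E = Set.Icc 1 (n + 1)) (hdisj : B ∩ shiftSet E = ∅) :
    AdjAvoiding (intervalsOf n B E) ∧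
      ∀ K : Set ℕ, IsInterval n K → K ∉ intervalsOf n B E →
        ¬ AdjAvoiding (intervalsOf n B E ∪ {K}) := by
  refine ⟨adjAvoiding_intervalsOf (Set.disjoint_iff_inter_eq_empty.mpr hdisj), ?_⟩
  rintro K ⟨i, j, hi, hij, hj, rfl⟩ hK hAA
  obtain ⟨L, hL, hadj⟩ :=
    exists_mem_intervalsOf_adjacent hB hE hunion.symm.subset hi hij hj hK
  exact hAA _ (Or.inr rfl) L (Or.inl hL) hadj

/-- If `(B, E)` is a complete shifted bipartition of `{1, …, n}`, then `J(B, E)` is a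
maximal (for inclusion) adjacency-avoiding subset of `I_n`: it is adjacency-avoiding and
adding any interval not in it destroys the adjacency-avoiding property. -/
theorem complete_shifted_bipartition_maximal (n : ℕ) (hn : 1 ≤ n) (B E : Set ℕ)
    (hB : B ⊆ Set.Icc 1 n) (hE : E ⊆ Set.Icc 1 n)
    (hunion : B ∪ shiftSet E = Set.Icc 1 (n + 1)) (hdisj : B ∩ shiftSet E = ∅) :
    AdjAvoiding (intervalsOf n B E) ∧
      ∀ K : Set ℕ, IsInterval n K → K ∉ intervalsOf n B E →
        ¬ AdjAvoiding (intervalsOf n B E ∪ {K}) :=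
  complete_shifted_bipartition_maximal_general n B E hB hE hunion hdisj
end

section
/- Fix n ≥ 1, let (C, F) be an extended shifted bipartition of {1, …, n}, and let v ∈ {1, …, n}. Write J = J(C, F) and T = J(tog_v(C, F)). Then: (1) if v ∉ C ∪ F, then T = refl_v(J) ∪ {⟦v⟧}; (2) otherwise, T = refl_v(J). -/
open Classical in
/-- The interval reflection at `v`, defined on intervals `K ≠ ⟦v⟧`:
`refl_v(K) = K ∪ {v}` if `v ∉ K` and `K ∪ {v}` is an interval of `{1, …, n}`;
`refl_v(K) = K \ {v}` if `v ∈ K` and `K \ {v}` is an interval of `{1, …, n}`;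
`refl_v(K) = K` otherwise. -/
noncomputable def reflInt (n v : ℕ) (K : Set ℕ) : Set ℕ :=
  if v ∉ K ∧ IsInterval n (K ∪ {v}) then K ∪ {v}
  else if v ∈ K ∧ IsInterval n (K \ {v}) then K \ {v}
  else K

/-- `refl_v(J) = {refl_v(K) : K ∈ J \ {⟦v⟧}}`. -/
noncomputable def reflSet (n v : ℕ) (J : Set (Set ℕ)) : Set (Set ℕ) :=
  reflInt n v '' (J \ {Set.Icc v v})

open Classical in
/-- First component of the toggle at `v` of `(C, F)`. -/
noncomputable def togC (C F : Set ℕ) (v : ℕ) : Set ℕ :=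
  if v ∉ C ∪ F then (C ∪ {v}) \ {v + 1}
  else if v ∈ C ∩ F then (C ∪ {v + 1}) \ {v}
  else C

open Classical in
/-- Second component of the toggle at `v` of `(C, F)`. -/
noncomputable def togF (C F : Set ℕ) (v : ℕ) : Set ℕ :=
  if v ∉ C ∪ F then (F ∪ {v}) \ {v - 1}
  else if v ∈ C ∩ F then (F ∪ {v - 1}) \ {v}
  else F

/-! Everything is governed by the transpositions `s = (v v+1)` and `t = (v-1 v)` of `ℕ`.
On an interval `⟦i,j⟧ ≠ ⟦v⟧`, `refl_v` acts as `⟦i,j⟧ ↦ ⟦s i, t j⟧`, an involution of the intervals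
other than `⟦v⟧`, so `refl_v(J(C,F)) = J(s⁻¹C, t⁻¹F) \ {⟦v⟧}`. The bipartition conditions say
`x + 1 ∈ C ↔ x ∉ F`, and with them each case of the toggle becomes `tog_v(C,F) = (s⁻¹C, t⁻¹F)`.
What remains is whether `⟦v⟧ ∈ J(s⁻¹C, t⁻¹F)`, i.e. whether `v + 1 ∈ C` and `v - 1 ∈ F`, which
happens exactly when `v ∉ C ∪ F`. -/

open Set Equiv

lemma Icc_ne_Icc_self_iff {i j v : ℕ} (hij : i ≤ j) : Icc i j ≠ Icc v v ↔ i ≠ v ∨ j ≠ v := by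
  rw [Ne, Icc_eq_Icc_iff hij, not_and_or]

lemma mem_intervalsOf {n : ℕ} {B E K : Set ℕ} :
    K ∈ intervalsOf n B E ↔
      ∃ i j, 1 ≤ i ∧ i ≤ j ∧ j ≤ n ∧ i ∈ B ∧ j ∈ E ∧ K = Icc i j := by
  constructor
  · rintro ⟨⟨i, j, hi, hij, hjn, rfl⟩, hB, hE⟩
    rw [intB, csInf_Icc hij] at hB
    rw [intE, csSup_Icc hij] at hE
    exact ⟨i, j, hi, hij, hjn, hB, hE, rfl⟩
  · rintro ⟨i, j, hi, hij, hjn, hB, hE, rfl⟩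
    exact ⟨⟨i, j, hi, hij, hjn, rfl⟩, by rwa [intB, csInf_Icc hij], by rwa [intE, csSup_Icc hij]⟩

lemma Icc_self_mem_intervalsOf {n v : ℕ} {B E : Set ℕ} (hv : 1 ≤ v) (hvn : v ≤ n) :
    Icc v v ∈ intervalsOf n B E ↔ v ∈ B ∧ v ∈ E := by
  rw [mem_intervalsOf]
  constructor
  · rintro ⟨i, j, -, hij, -, hB, hE, h⟩
    obtain ⟨rfl, rfl⟩ := (Icc_eq_Icc_iff hij).mp h.symm
    exact ⟨hB, hE⟩
  · rintro ⟨hB, hE⟩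
    exact ⟨v, v, hv, le_rfl, hvn, hB, hE, rfl⟩

lemma not_isInterval_of_gap {n x y z : ℕ} {S : Set ℕ} (hx : x ∈ S) (hy : y ∈ S) (hz : z ∉ S)
    (hxz : x ≤ z) (hzy : z ≤ y) : ¬ IsInterval n S := by
  rintro ⟨a, b, -, -, -, rfl⟩
  simp only [mem_Icc] at hx hy hz
  omega

section reflInt

variable {n v i j : ℕ}

lemma reflInt_of_isInterval_union {K : Set ℕ} (hvK : v ∉ K) (hK : IsInterval n (K ∪ {v})) :
    reflInt n v K = K ∪ {v} :=
  if_pos ⟨hvK, hK⟩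

lemma reflInt_of_isInterval_sdiff {K : Set ℕ} (hvK : v ∈ K) (hK : IsInterval n (K \ {v})) :
    reflInt n v K = K \ {v} := by
  rw [reflInt, if_neg (fun h => h.1 hvK), if_pos ⟨hvK, hK⟩]

lemma reflInt_Icc_of_left_eq_succ (hv : 1 ≤ v) (hij : v + 1 ≤ j) (hjn : j ≤ n) :
    reflInt n v (Icc (v + 1) j) = Icc v j := by
  have hU : Icc (v + 1) j ∪ {v} = Icc v j := by
    ext x; simp only [mem_union, mem_Icc, mem_singleton_iff]; omega
  rw [reflInt_of_isInterval_union (by simp) (hU ▸ ⟨v, j, hv, by omega, hjn, rfl⟩), hU]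

lemma reflInt_Icc_of_right_eq_pred (hi : 1 ≤ i) (hiv : i < v) (hvn : v ≤ n) :
    reflInt n v (Icc i (v - 1)) = Icc i v := by
  have hU : Icc i (v - 1) ∪ {v} = Icc i v := by
    ext x; simp only [mem_union, mem_Icc, mem_singleton_iff]; omega
  rw [reflInt_of_isInterval_union (by simp; omega) (hU ▸ ⟨i, v, hi, by omega, hvn, rfl⟩), hU]

lemma reflInt_Icc_of_left_eq (hv : 1 ≤ v) (hvj : v < j) (hjn : j ≤ n) :
    reflInt n v (Icc v j) = Icc (v + 1) j := by
  have hD : Icc v j \ {v} = Icc (v + 1) j := by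
    ext x; simp only [mem_sdiff, mem_Icc, mem_singleton_iff]; omega
  rw [reflInt_of_isInterval_sdiff (by simp; omega) (hD ▸ ⟨v + 1, j, by omega, hvj, hjn, rfl⟩), hD]

lemma reflInt_Icc_of_right_eq (hi : 1 ≤ i) (hiv : i < v) (hvn : v ≤ n) :
    reflInt n v (Icc i v) = Icc i (v - 1) := by
  have hD : Icc i v \ {v} = Icc i (v - 1) := by
    ext x; simp only [mem_sdiff, mem_Icc, mem_singleton_iff]; omega
  rw [reflInt_of_isInterval_sdiff (by simp; omega) (hD ▸ ⟨i, v - 1, hi, by omega, by omega, rfl⟩),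
    hD]

lemma reflInt_Icc_of_ne (hij : i ≤ j) (hi₀ : i ≠ v) (hi₁ : i ≠ v + 1) (hj₀ : j ≠ v)
    (hj₁ : j + 1 ≠ v) : reflInt n v (Icc i j) = Icc i j := by
  rw [reflInt, if_neg, if_neg]
  · rintro ⟨hvK, hD⟩
    simp only [mem_Icc] at hvK
    exact not_isInterval_of_gap (x := i) (y := j) (z := v) (by simp; omega) (by simp; omega)
      (by simp) hvK.1 hvK.2 hD
  · rintro ⟨hvK, hU⟩
    simp only [mem_Icc, not_and_or, not_le] at hvK
    rcases hvK with hvi | hjv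
    · exact not_isInterval_of_gap (x := v) (y := i) (z := v + 1) (by simp) (by simp; omega)
        (by simp; omega) (by omega) (by omega) hU
    · exact not_isInterval_of_gap (x := j) (y := v) (z := v - 1) (by simp; omega) (by simp)
        (by simp; omega) (by omega) (by omega) hU

lemma reflInt_Icc (hv : 1 ≤ v) (hvn : v ≤ n) (hi : 1 ≤ i) (hij : i ≤ j) (hjn : j ≤ n)
    (hne : i ≠ v ∨ j ≠ v) :
    reflInt n v (Icc i j) = Icc (swap v (v + 1) i) (swap (v - 1) v j) := by
  rcases (by omega : i = v + 1 ∨ j + 1 = v ∨ (i = v ∧ v < j) ∨ (j = v ∧ i < v) ∨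
      (i ≠ v ∧ i ≠ v + 1 ∧ j ≠ v ∧ j + 1 ≠ v)) with
    rfl | hj | ⟨rfl, hvj⟩ | ⟨rfl, hiv⟩ | ⟨hi₀, hi₁, hj₀, hj₁⟩
  · rw [reflInt_Icc_of_left_eq_succ hv hij hjn, swap_apply_right,
      swap_apply_of_ne_of_ne (by omega) (by omega)]
  · obtain rfl : j = v - 1 := by omega
    rw [reflInt_Icc_of_right_eq_pred hi (by omega) hvn, swap_apply_left,
      swap_apply_of_ne_of_ne (by omega) (by omega)]
  · rw [reflInt_Icc_of_left_eq hv hvj hjn, swap_apply_left,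
      swap_apply_of_ne_of_ne (by omega) (by omega)]
  · rw [reflInt_Icc_of_right_eq hi hiv hvn, swap_apply_right,
      swap_apply_of_ne_of_ne (by omega) (by omega)]
  · rw [reflInt_Icc_of_ne hij hi₀ hi₁ hj₀ hj₁, swap_apply_of_ne_of_ne hi₀ hi₁,
      swap_apply_of_ne_of_ne (by omega) hj₀]

lemma swap_endpoints_valid (hv : 1 ≤ v) (hvn : v ≤ n) (hi : 1 ≤ i) (hij : i ≤ j) (hjn : j ≤ n)
    (hne : i ≠ v ∨ j ≠ v) :
    1 ≤ swap v (v + 1) i ∧ swap v (v + 1) i ≤ swap (v - 1) v j ∧ swap (v - 1) v j ≤ n ∧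
      (swap v (v + 1) i ≠ v ∨ swap (v - 1) v j ≠ v) := by
  simp only [swap_apply_def]
  split_ifs <;> omega

lemma reflSet_intervalsOf (hv : 1 ≤ v) (hvn : v ≤ n) (B E : Set ℕ) :
    reflSet n v (intervalsOf n B E) =
      intervalsOf n (swap v (v + 1) ⁻¹' B) (swap (v - 1) v ⁻¹' E) \ {Icc v v} := by
  ext K
  simp only [reflSet, mem_image, mem_sdiff, mem_singleton_iff, mem_intervalsOf, mem_preimage]
  constructor
  · rintro ⟨_, ⟨⟨i, j, hi, hij, hjn, hB, hE, rfl⟩, hne⟩, rfl⟩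
    replace hne := (Icc_ne_Icc_self_iff hij).mp hne
    obtain ⟨hi', hij', hjn', hne'⟩ := swap_endpoints_valid hv hvn hi hij hjn hne
    rw [reflInt_Icc hv hvn hi hij hjn hne]
    exact ⟨⟨_, _, hi', hij', hjn', by rwa [swap_apply_self], by rwa [swap_apply_self], rfl⟩,
      (Icc_ne_Icc_self_iff hij').mpr hne'⟩
  · rintro ⟨⟨i, j, hi, hij, hjn, hB, hE, rfl⟩, hne⟩
    replace hne := (Icc_ne_Icc_self_iff hij).mp hne
    obtain ⟨hi', hij', hjn', hne'⟩ := swap_endpoints_valid hv hvn hi hij hjn hne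
    refine ⟨_, ⟨⟨_, _, hi', hij', hjn', hB, hE, rfl⟩, (Icc_ne_Icc_self_iff hij').mpr hne'⟩, ?_⟩
    rw [reflInt_Icc hv hvn hi' hij' hjn' hne', swap_apply_self, swap_apply_self]

end reflInt

lemma preimage_swap_eq_union_sdiff {α : Type*} [DecidableEq α] {S : Set α} {a b : α}
    (ha : a ∉ S) (hb : b ∈ S) : swap a b ⁻¹' S = (S ∪ {a}) \ {b} := by
  ext x
  simp only [mem_preimage, mem_sdiff, mem_union, mem_singleton_iff, swap_apply_def]
  split_ifs <;> grind

lemma preimage_swap_eq_self {α : Type*} [DecidableEq α] {S : Set α} {a b : α}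
    (h : a ∈ S ↔ b ∈ S) : swap a b ⁻¹' S = S := by
  ext x
  simp only [mem_preimage, swap_apply_def]
  split_ifs <;> grind

section toggle

variable {C F : Set ℕ} {v : ℕ}

lemma togC_eq_preimage_swap (h : v + 1 ∈ C ↔ v ∉ F) : togC C F v = swap v (v + 1) ⁻¹' C := by
  by_cases h₀ : v ∈ C ∪ F
  · by_cases h₁ : v ∈ C ∩ F
    · rw [togC, if_neg (not_not.mpr h₀), if_pos h₁, swap_comm]
      exact (preimage_swap_eq_union_sdiff (fun h' => h.mp h' h₁.2) h₁.1).symm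
    · rw [togC, if_neg (not_not.mpr h₀), if_neg h₁]
      exact (preimage_swap_eq_self (show v ∈ C ↔ v + 1 ∈ C by grind)).symm
  · rw [togC, if_pos h₀]
    rw [mem_union, not_or] at h₀
    exact (preimage_swap_eq_union_sdiff h₀.1 (h.mpr h₀.2)).symm

lemma togF_eq_preimage_swap (h : v ∈ C ↔ v - 1 ∉ F) : togF C F v = swap (v - 1) v ⁻¹' F := by
  by_cases h₀ : v ∈ C ∪ F
  · by_cases h₁ : v ∈ C ∩ F
    · rw [togF, if_neg (not_not.mpr h₀), if_pos h₁]
      exact (preimage_swap_eq_union_sdiff (h.mp h₁.1) h₁.2).symm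
    · rw [togF, if_neg (not_not.mpr h₀), if_neg h₁]
      exact (preimage_swap_eq_self (show v - 1 ∈ F ↔ v ∈ F by grind)).symm
  · rw [togF, if_pos h₀, swap_comm]
    rw [mem_union, not_or] at h₀
    exact (preimage_swap_eq_union_sdiff h₀.2 (not_not.mp (mt h.mpr h₀.1))).symm

end toggle

lemma succ_mem_iff_notMem {n x : ℕ} {C F : Set ℕ} (hunion : C ∪ shiftSet F = Icc 1 (n + 1))
    (hdisj : C ∩ shiftSet F = ∅) (hx : x ≤ n) : x + 1 ∈ C ↔ x ∉ F := by
  have hshift : x + 1 ∈ shiftSet F ↔ x ∈ F := (add_left_injective 1).mem_set_image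
  have hcover : x + 1 ∈ C ∪ shiftSet F := hunion ▸ ⟨by omega, by omega⟩
  refine ⟨fun hC hF => ?_, fun hF => hcover.resolve_right (mt hshift.mp hF)⟩
  exact (hdisj ▸ ⟨hC, hshift.mpr hF⟩ : x + 1 ∈ (∅ : Set ℕ))

theorem intervalsOf_toggle_general (n v : ℕ) (hv : 1 ≤ v) (hvn : v ≤ n)
    (C F : Set ℕ)
    (hunion : C ∪ shiftSet F = Set.Icc 1 (n + 1)) (hdisj : C ∩ shiftSet F = ∅) :
    (v ∉ C ∪ F →
      intervalsOf n (togC C F v) (togF C F v)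
        = reflSet n v (intervalsOf n C F) ∪ {Set.Icc v v}) ∧
    (v ∈ C ∪ F →
      intervalsOf n (togC C F v) (togF C F v)
        = reflSet n v (intervalsOf n C F)) := by
  have hsucc : v + 1 ∈ C ↔ v ∉ F := succ_mem_iff_notMem hunion hdisj hvn
  have hpred : v ∈ C ↔ v - 1 ∉ F := by
    simpa only [Nat.sub_add_cancel hv] using
      succ_mem_iff_notMem hunion hdisj (x := v - 1) (by omega)
  have hsingleton : Icc v v ∈ intervalsOf n (swap v (v + 1) ⁻¹' C) (swap (v - 1) v ⁻¹' F) ↔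
      v + 1 ∈ C ∧ v - 1 ∈ F := by
    rw [Icc_self_mem_intervalsOf hv hvn, mem_preimage, mem_preimage, swap_apply_left,
      swap_apply_right]
  rw [togC_eq_preimage_swap hsucc, togF_eq_preimage_swap hpred, reflSet_intervalsOf hv hvn]
  refine ⟨fun hvCF => ?_, fun hvCF => ?_⟩
  · rw [sdiff_union_of_subset (singleton_subset_iff.mpr (hsingleton.mpr ?_))]
    grind
  · rw [sdiff_singleton_eq_self (mt hsingleton.mp ?_)]
    grind

/-- Let `(C, F)` be an extended shifted bipartition of `{1, …, n}` (i.e.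
`C ⊆ {1, …, n+1}`, `F ⊆ {0, …, n}`, `C ∪ F[1] = {1, …, n+1}` and `C ∩ F[1] = ∅`)
and `v ∈ {1, …, n}`. Then `J(tog_v(C,F)) = refl_v(J(C,F)) ∪ {⟦v⟧}` if `v ∉ C ∪ F`,
and `J(tog_v(C,F)) = refl_v(J(C,F))` otherwise. -/
theorem intervalsOf_toggle (n v : ℕ) (hv : 1 ≤ v) (hvn : v ≤ n)
    (C F : Set ℕ) (hC : C ⊆ Set.Icc 1 (n + 1)) (hF : F ⊆ Set.Icc 0 n)
    (hunion : C ∪ shiftSet F = Set.Icc 1 (n + 1)) (hdisj : C ∩ shiftSet F = ∅) :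
    (v ∉ C ∪ F →
      intervalsOf n (togC C F v) (togF C F v)
        = reflSet n v (intervalsOf n C F) ∪ {Set.Icc v v}) ∧
    (v ∈ C ∪ F →
      intervalsOf n (togC C F v) (togF C F v)
        = reflSet n v (intervalsOf n C F)) :=
  intervalsOf_toggle_general n v hv hvn C F hunion hdisj
end
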